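/- If a perceivable route (v_i, v_{i-1}, ..., v_1, d) is a peer route (v_{i-1} is a peer of v_i), then its suffix (v_{i-1}, ..., v_1, d) is a customer route of v_{i-1}; more generally, if a perceivable route is a customer route at v_i, every proper suffix of it is also a perceivable customer route. -/

import Mathlib

open scoped Classical

namespace SBGP

/-- Business relationship of a neighbor, from the point of view of a given AS. -/
inductive Rel
  | customer
  | peer
  | provider
deriving DecidableEq

/-- The three positions at which the secure-route preference step can be inserted. -/
inductive SecModel
  | first
  | second
  | third
deriving DecidableEq

/-- An AS-level graph with business relationships on its edges. -/
structure ASGraph (V : Type*) where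
  adj : V → V → Bool
  /-- `rel u v` is the relationship of `v` as seen from `u`
      (`customer` means `v` is `u`'s customer, etc.). -/
  rel : V → V → Rel
  adj_symm : ∀ u v, adj u v = adj v u
  adj_irrefl : ∀ v, adj v v = false
  rel_consistent : ∀ u v, adj u v = true →
    ((rel u v = Rel.customer ↔ rel v u = Rel.provider) ∧
     (rel u v = Rel.peer ↔ rel v u = Rel.peer))

variable {V : Type*}

def lpRank : Rel → ℕ
  | Rel.customer => 0
  | Rel.peer => 1
  | Rel.provider => 2

/-- The relationship of the next hop of a route (`none` for trivial routes). -/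
def nextRel (G : ASGraph V) : List V → Option Rel
  | a :: b :: _ => some (G.rel a b)
  | _ => none

/-- Local-preference value of a route (customer < peer < provider). -/
def lpVal (G : ASGraph V) : List V → ℕ
  | a :: b :: _ => lpRank (G.rel a b)
  | _ => 0

/-- `R` is a (nonempty) path in `G`. -/
def IsPath (G : ASGraph V) : List V → Prop
  | [] => False
  | [_] => True
  | a :: b :: rest => G.adj a b = true ∧ IsPath G (b :: rest)

/-- `R` is a simple route in `G` ending at `d`. -/
def IsRouteTo (G : ASGraph V) (R : List V) (d : V) : Prop :=
  R.Nodup ∧ IsPath G R ∧ R.getLast? = some d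

/-- The export rule (Ex) along a route `a :: b :: c :: …`: each internal AS `b`
announces its route (with next hop `c`) to `a` only if that route is a customer
route of `b`, or `a` is `b`'s customer. -/
def ExportOK (G : ASGraph V) : List V → Prop
  | a :: b :: c :: rest =>
      (G.rel b c = Rel.customer ∨ G.rel b a = Rel.customer) ∧
      ExportOK G (b :: c :: rest)
  | _ => True

/-- A route is secure iff every AS on it has deployed S*BGP and it does not
contain the attacker (the bogus route is insecure even if the attacker is in `S`). -/
def SecureRoute (S : Finset V) (m : Option V) (R : List V) : Prop :=
  (∀ v ∈ R, v ∈ S) ∧ (∀ m', m = some m' → m' ∉ R)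

/-- A legitimate route: ends at the destination `d` and avoids the attacker. -/
def LegitRoute (m : Option V) (d : V) (R : List V) : Prop :=
  R.getLast? = some d ∧ ∀ m', m = some m' → m' ∉ R

/-- Perceivable routes at `s` for destination `d` when the (optional) attacker `m`
announces the bogus path "m,d": either a genuine export-compliant route to `d`
avoiding `m`, or an export-compliant route to `m` extended by `m`'s claimed
(possibly nonexistent) edge to `d`. -/
def Perceivable (G : ASGraph V) (m : Option V) (d : V) (s : V) (R : List V) : Prop :=
  R.head? = some s ∧
  ((IsRouteTo G R d ∧ ExportOK G R ∧ ∀ m', m = some m' → m' ∉ R) ∨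
   (∃ m' R', m = some m' ∧ R = R' ++ [d] ∧ IsRouteTo G R' m' ∧ d ∉ R' ∧ ExportOK G R'))

/-- The rank of a route (smaller is better), encoding lexicographically the
ranking steps of the given security model: LP (customer > peer > provider),
SP (shorter > longer) and SecP (secure > insecure), in the order determined by
the model.  All components are `< Fintype.card V + 2`, so the encoding is
faithful on simple routes. -/
noncomputable def rankNat [Fintype V] (G : ASGraph V) (S : Finset V) (m : Option V)
    (mdl : SecModel) (R : List V) : ℕ :=
  let B := Fintype.card V + 2
  let lp := lpVal G R
  let len := R.length
  let sec : ℕ := if SecureRoute S m R then 0 else 1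
  match mdl with
  | SecModel.first => sec * B * B + lp * B + len
  | SecModel.second => lp * B * B + sec * B + len
  | SecModel.third => lp * B * B + len * B + sec

/-- `n` exports the route `R` (its currently selected route) to neighbor `s`:
always if `R` is a customer route of `n` or `n` originates `R`; otherwise only
if `s` is `n`'s customer. -/
def exportsTo (G : ASGraph V) (n s : V) : List V → Prop
  | _ :: c :: _ => G.rel n c = Rel.customer ∨ G.rel n s = Rel.customer
  | _ => True

/-- Routes available to `s` given the current selections `σ` of all ASes:
routes exported by neighbors (with BGP loop detection), together with the
attacker's bogus announcement "m,d" to each of its neighbors. -/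
def Avail (G : ASGraph V) (m : Option V) (d : V) (σ : V → List V) (s : V)
    (R : List V) : Prop :=
  (∃ n, G.adj s n = true ∧ (∀ m', m = some m' → n ≠ m') ∧ σ n ≠ [] ∧
      (σ n).head? = some n ∧ s ∉ σ n ∧ exportsTo G n s (σ n) ∧ R = s :: σ n) ∨
  (∃ m', m = some m' ∧ G.adj s m' = true ∧ s ≠ d ∧ R = [s, m', d])

/-- A stable routing state for destination `d`, secure deployment `S`,
attacker `m`, security model `mdl` and tiebreak `tb`: every AS (other than the
destination and the attacker) selects the best available route, where ties in
rank are broken by the strict tiebreak `tb`. -/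
def Stable [Fintype V] (G : ASGraph V) (tb : V → List V → ℕ) (S : Finset V)
    (m : Option V) (d : V) (mdl : SecModel) (σ : V → List V) : Prop :=
  σ d = [d] ∧
  (∀ m', m = some m' → σ m' = []) ∧
  ∀ s, s ≠ d → (∀ m', m = some m' → s ≠ m') →
    ((σ s = [] ∧ ∀ R, ¬ Avail G m d σ s R) ∨
     (Avail G m d σ s (σ s) ∧
      ∀ R, Avail G m d σ s R → R ≠ σ s →
        rankNat G S m mdl (σ s) < rankNat G S m mdl R ∨
        (rankNat G S m mdl (σ s) = rankNat G S m mdl R ∧ tb s (σ s) < tb s R)))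

/-- `s` is happy: it selects a legitimate route to `d`, avoiding the attacker. -/
def Happy (m : Option V) (d : V) (σ : V → List V) (s : V) : Prop :=
  σ s ≠ [] ∧ (σ s).getLast? = some d ∧ ∀ m', m = some m' → m' ∉ σ s

/-- The set of most-preferred perceivable routes of `s` (before the tiebreak step). -/
def BPR [Fintype V] (G : ASGraph V) (S : Finset V) (m : Option V) (d : V)
    (mdl : SecModel) (s : V) (R : List V) : Prop :=
  Perceivable G m d s R ∧
  ∀ R', Perceivable G m d s R' → rankNat G S m mdl R ≤ rankNat G S m mdl R'

/-- The number of happy source ASes (sources other than `m` and `d`). -/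
noncomputable def happyCount [Fintype V] [DecidableEq V] (m d : V)
    (σ : V → List V) : ℕ :=
  (Finset.univ.filter fun s => s ≠ m ∧ s ≠ d ∧ Happy (some m) d σ s).card

/-- The customer-provider hierarchy is acyclic. -/
def Hierarchy (G : ASGraph V) : Prop :=
  ∃ h : V → ℕ, ∀ u v, G.adj u v = true → G.rel u v = Rel.customer → h v < h u

/-- The tiebreak of every AS is deterministic (injective on routes). -/
def InjTB (tb : V → List V → ℕ) : Prop :=
  ∀ s, Function.Injective (tb s)

end SBGP

namespace SBGP

variable {G : ASGraph V}

theorem ASGraph.rel_eq_customer_iff (G : ASGraph V) {a b : V} (h : G.adj a b = true) :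
    G.rel b a = Rel.customer ↔ G.rel a b = Rel.provider :=
  (G.rel_consistent b a (G.adj_symm a b ▸ h)).1

theorem IsPath.tail {a : V} {l : List V} (h : IsPath G (a :: l)) (hl : l ≠ []) :
    IsPath G l := by
  match l, hl with
  | _ :: _, _ => exact h.2

theorem IsPath.of_append_right {l₁ l₂ : List V} (h : IsPath G (l₁ ++ l₂)) (hl₂ : l₂ ≠ []) :
    IsPath G l₂ := by
  induction l₁ with
  | nil => exact h
  | cons a l₁ ih => exact ih (h.tail (by simp [hl₂]))

theorem ExportOK.tail {a : V} {l : List V} (h : ExportOK G (a :: l)) : ExportOK G l := by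
  match l with
  | [] | [_] => trivial
  | _ :: _ :: _ => exact h.2

theorem ExportOK.of_append_right {l₁ l₂ : List V} (h : ExportOK G (l₁ ++ l₂)) :
    ExportOK G l₂ := by
  induction l₁ with
  | nil => exact h
  | cons a l₁ ih => exact ih h.tail

/-- `b` may pass a non-customer route on to `a` only if `a` is its customer,
that is, only if `b` is `a`'s provider. -/
theorem ExportOK.rel_eq_customer_of_ne_provider {a b c : V} {rest : List V}
    (hE : ExportOK G (a :: b :: c :: rest)) (hP : IsPath G (a :: b :: c :: rest))
    (hab : G.rel a b ≠ Rel.provider) : G.rel b c = Rel.customer :=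
  hE.1.resolve_right fun hba => hab ((G.rel_eq_customer_iff hP.1).1 hba)

theorem ExportOK.isChain_customer {a b : V} {rest : List V}
    (hE : ExportOK G (a :: b :: rest)) (hP : IsPath G (a :: b :: rest))
    (hab : G.rel a b = Rel.customer) :
    List.IsChain (fun x y => G.rel x y = Rel.customer) (a :: b :: rest) := by
  induction rest generalizing a b with
  | nil => exact List.isChain_pair.mpr hab
  | cons c rest ih =>
    have hbc := hE.rel_eq_customer_of_ne_provider hP (by simp [hab])
    exact (ih hE.2 hP.2 hbc).cons_cons hab

/-- **Valley-free structure of export-compliant routes.**  If an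
export-compliant route `(a, b, c, …)` is a peer route (`b` is a peer of `a`),
then its suffix starting at `b` is a customer route of `b`; and if an
export-compliant route is a customer route at its first AS, then every hop of
it is a customer-to-provider edge and every suffix of it is again an
export-compliant (customer) route. -/
theorem valley_free {V : Type*} (G : ASGraph V) :
    (∀ (a b c : V) (rest : List V),
        IsPath G (a :: b :: c :: rest) →
        ExportOK G (a :: b :: c :: rest) →
        G.rel a b = Rel.peer →
        G.rel b c = Rel.customer) ∧
    (∀ (a b : V) (rest : List V),
        IsPath G (a :: b :: rest) →
        ExportOK G (a :: b :: rest) →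
        G.rel a b = Rel.customer →
        List.Chain' (fun x y => G.rel x y = Rel.customer) (a :: b :: rest) ∧
        ∀ l₁ l₂, a :: b :: rest = l₁ ++ l₂ → l₂ ≠ [] →
          IsPath G l₂ ∧ ExportOK G l₂) := by
  refine ⟨fun a b c rest hP hE hab => hE.rel_eq_customer_of_ne_provider hP (by simp [hab]),
    fun a b rest hP hE hab => ⟨hE.isChain_customer hP hab, fun l₁ l₂ hsplit hl₂ => ?_⟩⟩
  rw [hsplit] at hP hE
  exact ⟨hP.of_append_right hl₂, hE.of_append_right⟩

end SBGP
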